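/- arXiv:2207.13563 — 2 statements merged into one kernel-verified Lean document; each statement's English description precedes it below -/
import Mathlib

section
/- Let f, g : ℂ × ℂ → ℂ be functions such that g is antisymmetric (g(x,y) = -g(y,x) for all x,y) and such that for all a, b, c, x ∈ ℂ one has g(b,c)f(x,a) + g(c,a)f(x,b) + g(a,b)f(x,c) = 0. Let (x_i)_{i∈ℕ} and (b_i)_{i∈ℕ} be sequences in ℂ with the b_i pairwise distinct, with g(b_i, b_j) ≠ 0 for all i ≠ j, and with f(x_i, b_j) ≠ 0 for all i, j. Define, for integers n ≥ k ≥ 0, f_{n,k} := (∏_{i=k}^{n-1} f(x_i, b_k)) / (∏_{i=k+1}^{n} g(b_i, b_k)) and g_{n,k} := (f(x_k, b_k)/f(x_n, b_n)) · (∏_{i=k+1}^{n} f(x_i, b_n)) / (∏_{i=k}^{n-1} g(b_i, b_n)) (empty products equal 1). Then for all n ≥ k ≥ 0: ∑_{i=k}^{n} f_{n,i} g_{i,k} = δ_{n,k} and ∑_{i=k}^{n} g_{n,i} f_{i,k} = δ_{n,k}, where δ_{n,k} is the Kronecker delta. -/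
/-!
Up to the factor `f (x k, b k)`, the entry `(n, k)` of `F * G` is the generalized divided
difference over `S = [k, n]` of `i ↦ ∏_{k < j < n} f (x j, b i)`, a product of `|S| - 2`
factors. Such divided differences vanish. For two points `p ≠ q` of `S`, the three-term
relation writes `f (z, b i)` as a combination of `g (b i, b q)` and `g (b i, b p)`, and
multiplying by `g (b i, b q)` cancels a denominator factor, turning a divided difference over `S`
into minus one over `S \ {q}`. Induction on the number of factors then reduces everything to
`|S| = 2`, where antisymmetry gives `0`. Hence the lower triangular sections of `F` and `G` are
mutually inverse, and `G * F = 1` follows because a one-sided inverse of a square matrix over a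
commutative ring is two-sided.
-/

open Finset

section DividedDifference

variable {ι α K : Type*} [DecidableEq ι] [Field K]

/-- For `g (u, v) = v - u` this is the classical divided difference of `φ` at the nodes `a i`. -/
def divDiff (g : α × α → K) (a : ι → α) (S : Finset ι) (φ : ι → K) : K :=
  ∑ i ∈ S, φ i / ∏ j ∈ S.erase i, g (a j, a i)

variable {f g : α × α → K} {a : ι → α} {S : Finset ι}

theorem mul_divDiff_f_mul (hanti : ∀ x y, g (x, y) = -g (y, x))
    (hfg : ∀ a b c x, g (b, c) * f (x, a) + g (c, a) * f (x, b) + g (a, b) * f (x, c) = 0)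
    (z : α) (p q : ι) (φ : ι → K) :
    g (a p, a q) * divDiff g a S (fun i => f (z, a i) * φ i) =
      f (z, a p) * divDiff g a S (fun i => g (a i, a q) * φ i) -
        f (z, a q) * divDiff g a S (fun i => g (a i, a p) * φ i) := by
  simp only [divDiff, mul_sum, ← sum_sub_distrib]
  refine sum_congr rfl fun i _ => ?_
  linear_combination (φ i / ∏ j ∈ S.erase i, g (a j, a i)) *
    (hfg (a i) (a p) (a q) z - f (z, a p) * hanti (a q) (a i))

theorem divDiff_g_mul_eq_neg (hanti : ∀ x y, g (x, y) = -g (y, x)) (hdiag : ∀ y, g (y, y) = 0)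
    {q : ι} (hq : q ∈ S) (hS : ∀ i ∈ S, i ≠ q → g (a q, a i) ≠ 0) (φ : ι → K) :
    divDiff g a S (fun i => g (a i, a q) * φ i) = -divDiff g a (S.erase q) φ := by
  rw [divDiff, ← add_sum_erase S _ hq, hdiag, zero_mul, zero_div, zero_add, divDiff,
    ← sum_neg_distrib]
  refine sum_congr rfl fun i hi => ?_
  obtain ⟨hiq, hiS⟩ := mem_erase.1 hi
  rw [← mul_prod_erase (S.erase i) _ (mem_erase.2 ⟨Ne.symm hiq, hq⟩), erase_right_comm,
    hanti, neg_mul, neg_div, mul_div_mul_left _ _ (hS i hiS hiq)]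

theorem divDiff_prod_eq_zero (hanti : ∀ x y, g (x, y) = -g (y, x)) (hdiag : ∀ y, g (y, y) = 0)
    (hfg : ∀ a b c x, g (b, c) * f (x, a) + g (c, a) * f (x, b) + g (a, b) * f (x, c) = 0)
    (L : Multiset α) (hS : S.card = L.card + 2)
    (hg : (S : Set ι).Pairwise fun i j => g (a i, a j) ≠ 0) :
    divDiff g a S (fun i => (L.map fun z => f (z, a i)).prod) = 0 := by
  induction L using Multiset.induction_on generalizing S with
  | empty =>
    obtain ⟨p, q, hpq, rfl⟩ := card_eq_two.1 hS
    simp [divDiff, sum_pair hpq, hpq, erase_insert_of_ne hpq, hanti (a q)]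
  | cons z L ih =>
    obtain ⟨p, hp, q, hq, hpq⟩ := one_lt_card.1 (by rw [hS]; simp : 1 < S.card)
    have hvanish : ∀ r ∈ S, divDiff g a S
        (fun i => g (a i, a r) * (L.map fun z => f (z, a i)).prod) = 0 := by
      intro r hr
      rw [divDiff_g_mul_eq_neg hanti hdiag hr (fun i hi hir => hg hr hi (Ne.symm hir)),
        ih (by rw [card_erase_of_mem hr, hS]; simp) (hg.mono (coe_subset.2 (erase_subset r S))),
        neg_zero]
    have hexpand := mul_divDiff_f_mul (a := a) (S := S) hanti hfg z p q
      (fun i => (L.map fun z => f (z, a i)).prod)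
    simp only [hvanish p hp, hvanish q hq, mul_zero, sub_zero, Multiset.map_cons,
      Multiset.prod_cons] at hexpand ⊢
    exact (mul_eq_zero.1 hexpand).resolve_left (hg hp hq hpq)

end DividedDifference

section IntervalProducts

variable {M : Type*} [CommMonoid M] (h : ℕ → M) {k i n : ℕ}

theorem prod_Ico_mul_prod_Ioc (hki : k ≤ i) (hin : i ≤ n) (hkn : k < n) :
    (∏ j ∈ Ico i n, h j) * ∏ j ∈ Ioc k i, h j = h i * ∏ j ∈ Ioo k n, h j := by
  rw [← Ico_add_one_add_one_eq_Ioc, ← Ico_add_one_left_eq_Ioo]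
  rcases hin.eq_or_lt with rfl | hlt
  · rw [Ico_self, prod_empty, one_mul, prod_Ico_succ_top (by omega) h, mul_comm]
  · rw [prod_eq_prod_Ico_succ_bot hlt h, mul_assoc, mul_comm (∏ j ∈ Ico (i + 1) n, h j),
      prod_Ico_consecutive h (by omega) (by omega)]

theorem prod_Ioc_mul_prod_Ico (hki : k ≤ i) (hin : i ≤ n) :
    (∏ j ∈ Ioc i n, h j) * ∏ j ∈ Ico k i, h j = ∏ j ∈ (Icc k n).erase i, h j := by
  have hsplit : (Icc k n).erase i = Ico k i ∪ Ioc i n := by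
    ext j; simp only [mem_erase, mem_Icc, mem_union, mem_Ico, mem_Ioc]; omega
  rw [hsplit, prod_union (disjoint_left.2 fun j hj hj' => by
    simp only [mem_Ico, mem_Ioc] at hj hj'; omega), mul_comm]

end IntervalProducts

theorem prod_div_prod_mul_prod_div_prod {K : Type*} [Field K] (u v : ℕ → K) (c : K)
    {k i n : ℕ} (hki : k ≤ i) (hin : i ≤ n) (hkn : k < n) (hu : u i ≠ 0) :
    (∏ j ∈ Ico i n, u j) / (∏ j ∈ Ioc i n, v j) *
        (c / u i * (∏ j ∈ Ioc k i, u j) / ∏ j ∈ Ico k i, v j) =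
      c * ((∏ j ∈ Ioo k n, u j) / ∏ j ∈ (Icc k n).erase i, v j) := by
  calc (∏ j ∈ Ico i n, u j) / (∏ j ∈ Ioc i n, v j) *
        (c / u i * (∏ j ∈ Ioc k i, u j) / ∏ j ∈ Ico k i, v j)
      = c / u i * ((∏ j ∈ Ico i n, u j) * ∏ j ∈ Ioc k i, u j) /
          ((∏ j ∈ Ioc i n, v j) * ∏ j ∈ Ico k i, v j) := by ring
    _ = c * ((∏ j ∈ Ioo k n, u j) / ∏ j ∈ (Icc k n).erase i, v j) := by
      rw [prod_Ico_mul_prod_Ioc u hki hin hkn, prod_Ioc_mul_prod_Ico v hki hin]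
      field_simp

section LowerTriangular

variable {R : Type*} [CommRing R]

def lowerTriangularPart (F : ℕ → ℕ → R) (N : ℕ) : Matrix (Fin N) (Fin N) R :=
  Matrix.of fun p q => if q ≤ p then F p q else 0

theorem lowerTriangularPart_mul_apply (F G : ℕ → ℕ → R) {N : ℕ} (p q : Fin N) :
    (lowerTriangularPart F N * lowerTriangularPart G N) p q =
      ∑ i ∈ Icc (q : ℕ) p, F p i * G i q := by
  simp only [lowerTriangularPart, Matrix.mul_apply, Matrix.of_apply]
  calc ∑ j, (if j ≤ p then F p j else 0) * (if q ≤ j then G j q else 0)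
      = ∑ j, if j ∈ Icc q p then F p j * G j q else 0 := by
        refine sum_congr rfl fun j _ => ?_
        by_cases hjp : j ≤ p <;> by_cases hqj : q ≤ j <;> simp [hjp, hqj]
    _ = ∑ i ∈ Icc (q : ℕ) p, F p i * G i q := by
        rw [sum_ite_mem, univ_inter, ← Fin.map_valEmbedding_Icc, sum_map]
        rfl

theorem sum_Icc_mul_eq_ite_comm (F G : ℕ → ℕ → R)
    (h : ∀ n k, k ≤ n → ∑ i ∈ Icc k n, F n i * G i k = if n = k then 1 else 0)
    {n k : ℕ} (hkn : k ≤ n) : ∑ i ∈ Icc k n, G n i * F i k = if n = k then 1 else 0 := by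
  have hFG : lowerTriangularPart F (n + 1) * lowerTriangularPart G (n + 1) = 1 := by
    ext p q
    rw [lowerTriangularPart_mul_apply, Matrix.one_apply]
    rcases le_or_gt (q : ℕ) p with hqp | hpq
    · simp [h p q hqp, Fin.ext_iff]
    · simp [Icc_eq_empty_of_lt hpq, Fin.ext_iff, hpq.ne]
  have hGF := mul_eq_one_comm.1 hFG
  have hentry := congr_fun₂ hGF (Fin.last n) ⟨k, by omega⟩
  rw [lowerTriangularPart_mul_apply, Matrix.one_apply] at hentry
  simpa [Fin.ext_iff] using hentry

end LowerTriangular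

theorem fg_inversion_general
    (f g : ℂ × ℂ → ℂ)
    (hanti : ∀ x y : ℂ, g (x, y) = - g (y, x))
    (hfg : ∀ a b c x : ℂ,
      g (b, c) * f (x, a) + g (c, a) * f (x, b) + g (a, b) * f (x, c) = 0)
    (x b : ℕ → ℂ)
    (hg : ∀ i j : ℕ, i ≠ j → g (b i, b j) ≠ 0)
    (hf : ∀ i j : ℕ, f (x i, b j) ≠ 0)
    (F G : ℕ → ℕ → ℂ)
    (hF : ∀ n k : ℕ, k ≤ n →
      F n k = (∏ i ∈ Finset.Ico k n, f (x i, b k)) /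
        (∏ i ∈ Finset.Ioc k n, g (b i, b k)))
    (hG : ∀ n k : ℕ, k ≤ n →
      G n k = (f (x k, b k) / f (x n, b n)) *
        (∏ i ∈ Finset.Ioc k n, f (x i, b n)) /
        (∏ i ∈ Finset.Ico k n, g (b i, b n))) :
    ∀ n k : ℕ, k ≤ n →
      ((∑ i ∈ Finset.Icc k n, F n i * G i k) = (if n = k then (1 : ℂ) else 0)) ∧
      ((∑ i ∈ Finset.Icc k n, G n i * F i k) = (if n = k then (1 : ℂ) else 0)) := by
  have hdiag : ∀ y, g (y, y) = 0 := fun y => by linear_combination hanti y y / 2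
  have hFG : ∀ n k : ℕ, k ≤ n → ∑ i ∈ Icc k n, F n i * G i k = if n = k then 1 else 0 := by
    intro n k hkn
    rcases hkn.eq_or_lt with rfl | hkn
    · simp [hF, hG, hf k k]
    have hterm : ∀ i ∈ Icc k n, F n i * G i k = f (x k, b k) *
        ((∏ j ∈ Ioo k n, f (x j, b i)) / ∏ j ∈ (Icc k n).erase i, g (b j, b i)) := by
      intro i hi
      obtain ⟨hki, hin⟩ := mem_Icc.1 hi
      rw [hF n i hin, hG i k hki]
      exact prod_div_prod_mul_prod_div_prod _ _ _ hki hin hkn (hf i i)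
    have hcard : (Icc k n).card = ((Ioo k n).val.map x).card + 2 := by
      simp only [Nat.card_Icc, Multiset.card_map, card_val, Nat.card_Ioo]
      omega
    have hzero := divDiff_prod_eq_zero (a := b) hanti hdiag hfg _ hcard
      (fun i _ j _ hij => hg i j hij)
    simp only [divDiff, Multiset.map_map, Function.comp_def, prod_map_val] at hzero
    rw [sum_congr rfl hterm, ← mul_sum, hzero, mul_zero, if_neg hkn.ne']
  exact fun n k hkn => ⟨hFG n k hkn, sum_Icc_mul_eq_ite_comm F G hFG hkn⟩

/-- The (f,g)-inversion formula: with `f_{n,k}` and `g_{n,k}` defined from sequences `x`, `b`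
and functions `f, g` satisfying the three-term relation, the two matrices are inverse
lower-triangular matrices. -/
theorem fg_inversion
    (f g : ℂ × ℂ → ℂ)
    (hanti : ∀ x y : ℂ, g (x, y) = - g (y, x))
    (hfg : ∀ a b c x : ℂ,
      g (b, c) * f (x, a) + g (c, a) * f (x, b) + g (a, b) * f (x, c) = 0)
    (x b : ℕ → ℂ)
    (hb : ∀ i j : ℕ, i ≠ j → b i ≠ b j)
    (hg : ∀ i j : ℕ, i ≠ j → g (b i, b j) ≠ 0)
    (hf : ∀ i j : ℕ, f (x i, b j) ≠ 0)
    (F G : ℕ → ℕ → ℂ)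
    (hF : ∀ n k : ℕ, k ≤ n →
      F n k = (∏ i ∈ Finset.Ico k n, f (x i, b k)) /
        (∏ i ∈ Finset.Ioc k n, g (b i, b k)))
    (hG : ∀ n k : ℕ, k ≤ n →
      G n k = (f (x k, b k) / f (x n, b n)) *
        (∏ i ∈ Finset.Ioc k n, f (x i, b n)) /
        (∏ i ∈ Finset.Ico k n, g (b i, b n))) :
    ∀ n k : ℕ, k ≤ n →
      ((∑ i ∈ Finset.Icc k n, F n i * G i k) = (if n = k then (1 : ℂ) else 0)) ∧
      ((∑ i ∈ Finset.Icc k n, G n i * F i k) = (if n = k then (1 : ℂ) else 0)) :=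
  fg_inversion_general f g hanti hfg x b hg hf F G hF hG
end

section
/- Let q ∈ ℂ with 0 < |q| < 1, let m, n ∈ ℕ, and let a, b, c ∈ ℂ with a, b, c ≠ 0, such that |b q^{-m-n}/c| < 1 and all factors appearing in denominators below are nonzero (in particular a, c ∉ {q^{-k} : k ≥ 1}). Then ∑_{k=0}^{∞} (c/b, a q^{1+m}, c q^{1+n};q)_k / ((q, aq, cq;q)_k) · (b q^{-m-n}/c)^k = 0. -/
/-- The q-Pochhammer symbol `(a;q)_n = ∏_{i=0}^{n-1} (1 - a q^i)`. -/
noncomputable def qPoch (q a : ℂ) (n : ℕ) : ℂ := ∏ i ∈ Finset.range n, (1 - a * q ^ i)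

/-!
Since `(x q^{1+m};q)_k / (x q;q)_k = (x q^{1+k};q)_m / (x q;q)_m`, the `k`-th summand is
`(c/b;q)_k / (q;q)_k · z^k` times a polynomial of degree at most `m + n` evaluated at `q^k`,
where `z = b q^{-m-n} / c`. The sum is therefore a linear combination of the q-binomial series
`f(w) = ∑_k (c/b;q)_k / (q;q)_k · w^k` at the points `w = q^j z`, `j ≤ m + n`. Each of these
vanishes: `f` satisfies `(1 - w) f(w) = (1 - (c/b) w) f(q w)`, so `f(w) = 0` as soon as
`(c/b) w q^N = 1` for some `N ≥ 0`, and here `(c/b) q^j z = q^{j-m-n}`.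
-/

open Finset Filter Topology Polynomial

section QPochhammer

variable {q : ℂ}

lemma qPoch_zero (q x : ℂ) : qPoch q x 0 = 1 := prod_range_zero _

lemma qPoch_succ (q x : ℂ) (k : ℕ) : qPoch q x (k + 1) = qPoch q x k * (1 - x * q ^ k) :=
  prod_range_succ _ _

lemma qPoch_add (q x : ℂ) (m k : ℕ) :
    qPoch q x (m + k) = qPoch q x m * qPoch q (x * q ^ m) k := by
  simp only [qPoch, prod_range_add, mul_assoc, ← pow_add]

lemma qPoch_ne_zero (hq : ‖q‖ ≤ 1) {x : ℂ} (hx : ‖x‖ < 1) (k : ℕ) : qPoch q x k ≠ 0 := by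
  refine prod_ne_zero_iff.2 fun i _ => sub_ne_zero.2 fun h => ?_
  have : ‖x * q ^ i‖ < 1 := by
    rw [norm_mul, norm_pow]
    exact mul_lt_one_of_nonneg_of_lt_one_left (norm_nonneg x) hx (pow_le_one₀ (norm_nonneg q) hq)
  simp [← h] at this

lemma qPoch_shift_div_eq {x : ℂ} {m k : ℕ} (hk : qPoch q x k ≠ 0) (hm : qPoch q x m ≠ 0) :
    qPoch q (x * q ^ m) k / qPoch q x k = qPoch q (x * q ^ k) m / qPoch q x m := by
  rw [div_eq_div_iff hk hm, mul_comm, ← qPoch_add, mul_comm, ← qPoch_add, add_comm]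

lemma one_sub_pow_succ_ne_zero (hq : ‖q‖ < 1) (k : ℕ) : 1 - q ^ (k + 1) ≠ 0 := by
  have := qPoch_ne_zero hq.le hq (k + 1)
  rw [qPoch_succ, ← pow_succ'] at this
  exact right_ne_zero_of_mul this

end QPochhammer

noncomputable def qBinomialTerm (q a w : ℂ) (k : ℕ) : ℂ := qPoch q a k / qPoch q q k * w ^ k

namespace qBinomialTerm

variable {q : ℂ} (a : ℂ)

lemma zero (w : ℂ) : qBinomialTerm q a w 0 = 1 := by simp [qBinomialTerm, qPoch_zero]

lemma mul_arg (w v : ℂ) (k : ℕ) :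
    qBinomialTerm q a (v * w) k = v ^ k * qBinomialTerm q a w k := by
  simp only [qBinomialTerm, mul_pow]; ring

lemma succ (hq : ‖q‖ < 1) (w : ℂ) (k : ℕ) :
    qBinomialTerm q a w (k + 1) =
      (1 - a * q ^ k) * w / (1 - q ^ (k + 1)) * qBinomialTerm q a w k := by
  have hk := qPoch_ne_zero hq.le hq k
  have hk' := one_sub_pow_succ_ne_zero hq k
  simp only [qBinomialTerm, qPoch_succ, ← pow_succ']
  field_simp
  ring

lemma summable (hq : ‖q‖ < 1) {w : ℂ} (hw : ‖w‖ < 1) : Summable (qBinomialTerm q a w) := by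
  have hratio : Tendsto (fun k : ℕ => (1 - a * q ^ k) * w / (1 - q ^ (k + 1))) atTop (𝓝 w) := by
    have h0 := tendsto_pow_atTop_nhds_zero_of_norm_lt_one hq
    have h1 := h0.comp (tendsto_add_atTop_nat 1)
    have : Tendsto (fun k : ℕ => (1 - a * q ^ k) * w / (1 - q ^ (k + 1))) atTop
        (𝓝 ((1 - a * 0) * w / (1 - 0))) :=
      ((tendsto_const_nhds.sub (h0.const_mul a)).mul_const w).div
        (tendsto_const_nhds.sub h1) (by norm_num)
    simpa using this
  refine summable_of_ratio_norm_eventually_le (r := (1 + ‖w‖) / 2) (by linarith) ?_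
  filter_upwards [hratio.norm.eventually (gt_mem_nhds (by linarith : ‖w‖ < (1 + ‖w‖) / 2))]
    with k hk
  rw [succ a hq w, norm_mul]
  exact mul_le_mul_of_nonneg_right hk.le (norm_nonneg _)

lemma one_sub_mul_tsum (hq : ‖q‖ < 1) {w : ℂ} (hw : ‖w‖ < 1) :
    (1 - w) * ∑' k, qBinomialTerm q a w k = (1 - a * w) * ∑' k, qBinomialTerm q a (q * w) k := by
  have hqw : ‖q * w‖ < 1 := by
    rw [norm_mul]; exact mul_lt_one_of_nonneg_of_lt_one_right hq.le (norm_nonneg w) hw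
  have hF := (summable a hq hw).hasSum
  have hG := (summable a hq hqw).hasSum
  have hF' := (hasSum_nat_add_iff' 1).2 hF
  have hG' := (hasSum_nat_add_iff' 1).2 hG
  simp only [sum_range_one, zero] at hF' hG'
  have hrec : (fun k => qBinomialTerm q a w (k + 1) - qBinomialTerm q a (q * w) (k + 1)) =
      fun k => w * qBinomialTerm q a w k - a * w * qBinomialTerm q a (q * w) k := by
    funext k
    have := one_sub_pow_succ_ne_zero hq k
    simp only [mul_arg, succ a hq w]
    field_simp
  have := (hF'.sub hG').unique (hrec ▸ (hF.mul_left w).sub (hG.mul_left (a * w)))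
  linear_combination this

lemma tsum_eq_zero (hq : ‖q‖ < 1) {w : ℂ} (hw : ‖w‖ < 1) (N : ℕ) (hN : a * w * q ^ N = 1) :
    ∑' k, qBinomialTerm q a w k = 0 := by
  have of_rhs_eq_zero {w : ℂ} (hw : ‖w‖ < 1)
      (h : (1 - a * w) * ∑' k, qBinomialTerm q a (q * w) k = 0) :
      ∑' k, qBinomialTerm q a w k = 0 := by
    rw [← one_sub_mul_tsum a hq hw] at h
    exact (mul_eq_zero.1 h).resolve_left (sub_ne_zero.2 fun h1 => by simp [← h1] at hw)
  induction N generalizing w with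
  | zero =>
    rw [pow_zero, mul_one] at hN
    exact of_rhs_eq_zero hw (by simp [hN])
  | succ N ih =>
    have hqw : ‖q * w‖ < 1 := by
      rw [norm_mul]; exact mul_lt_one_of_nonneg_of_lt_one_right hq.le (norm_nonneg w) hw
    exact of_rhs_eq_zero hw (by rw [ih hqw (by rw [← hN]; ring), mul_zero])

lemma hasSum_zero_of_mul_pow_eq_one (hq : ‖q‖ < 1) {w : ℂ} (hw : ‖w‖ < 1) (N : ℕ)
    (hN : a * w * q ^ N = 1) : HasSum (qBinomialTerm q a w) 0 :=
  (summable a hq hw).hasSum_iff.2 (tsum_eq_zero a hq hw N hN)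

lemma hasSum_mul_pow_pow_eq_zero (hq : ‖q‖ < 1) {w : ℂ} (hw : ‖w‖ < 1) {N j : ℕ} (hj : j ≤ N)
    (hN : a * w * q ^ N = 1) : HasSum (fun k => qBinomialTerm q a w k * (q ^ k) ^ j) 0 := by
  have hterm : (fun k => qBinomialTerm q a w k * (q ^ k) ^ j) = qBinomialTerm q a (q ^ j * w) :=
    funext fun k => by rw [mul_arg, pow_right_comm, mul_comm]
  rw [hterm]
  refine hasSum_zero_of_mul_pow_eq_one a hq ?_ (N - j) ?_
  · rw [norm_mul, norm_pow]
    exact mul_lt_one_of_nonneg_of_lt_one_right (pow_le_one₀ (norm_nonneg q) hq.le)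
      (norm_nonneg w) hw
  · rw [← hN, ← pow_mul_pow_sub q hj]; ring

end qBinomialTerm

lemma hasSum_mul_eval_eq_zero {R : Type*} [CommSemiring R] [TopologicalSpace R]
    [IsTopologicalSemiring R] {t r : ℕ → R} (P : R[X])
    (h : ∀ j ≤ P.natDegree, HasSum (fun k => t k * r k ^ j) 0) :
    HasSum (fun k => t k * P.eval (r k)) 0 := by
  have := hasSum_sum fun j hj => (h j (Nat.lt_succ_iff.1 (mem_range.1 hj))).mul_left (P.coeff j)
  simp only [mul_zero, sum_const_zero] at this
  refine this.congr_fun fun k => ?_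
  simp only [eval_eq_sum_range, mul_sum]
  exact sum_congr rfl fun j _ => by ring

noncomputable def qPochPoly (q x : ℂ) (m : ℕ) : ℂ[X] := ∏ i ∈ range m, (1 - C (x * q ^ i) * X)

lemma eval_qPochPoly (q x y : ℂ) (m : ℕ) : (qPochPoly q x m).eval y = qPoch q (x * y) m := by
  simp only [qPochPoly, qPoch, eval_prod, eval_sub, eval_one, eval_mul, eval_C, eval_X]
  exact prod_congr rfl fun i _ => by ring

lemma natDegree_qPochPoly_le (q x : ℂ) (m : ℕ) : (qPochPoly q x m).natDegree ≤ m := by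
  refine (natDegree_prod_le _ _).trans ?_
  refine (sum_le_card_nsmul (range m) _ 1 fun i _ => ?_).trans (by simp)
  compute_degree

theorem vanishing_3phi2_general (q a b c : ℂ) (m n : ℕ)
    (hq0 : 0 < ‖q‖) (hq1 : ‖q‖ < 1)
    (hb : b ≠ 0) (hc : c ≠ 0)
    (harg : ‖b * q ^ (-(m : ℤ) - n) / c‖ < 1)
    (hden : ∀ k : ℕ, qPoch q q k ≠ 0 ∧ qPoch q (a * q) k ≠ 0 ∧ qPoch q (c * q) k ≠ 0) :
    HasSum (fun k : ℕ =>
      qPoch q (c / b) k * qPoch q (a * q ^ (1 + m)) k * qPoch q (c * q ^ (1 + n)) k /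
        (qPoch q q k * qPoch q (a * q) k * qPoch q (c * q) k) *
        (b * q ^ (-(m : ℤ) - n) / c) ^ k) 0 := by
  set z := b * q ^ (-(m : ℤ) - n) / c
  have hcz : c / b * z * q ^ (m + n) = 1 := by
    have hpow : q ^ (-(m : ℤ) - n) * q ^ (m + n) = 1 := by
      rw [← zpow_natCast, ← zpow_add₀ (norm_pos_iff.1 hq0)]
      simp
    simp only [z]
    field_simp
    linear_combination hpow
  set P := qPochPoly q (a * q) m * qPochPoly q (c * q) n
  have hdeg : P.natDegree ≤ m + n :=
    natDegree_mul_le.trans (add_le_add (natDegree_qPochPoly_le ..) (natDegree_qPochPoly_le ..))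
  have := (hasSum_mul_eval_eq_zero P fun j hj =>
    qBinomialTerm.hasSum_mul_pow_pow_eq_zero (c / b) hq1 harg (hj.trans hdeg) hcz).mul_left
      (qPoch q (a * q) m * qPoch q (c * q) n)⁻¹
  rw [mul_zero] at this
  refine this.congr_fun fun k => ?_
  obtain ⟨-, ha_k, hc_k⟩ := hden k
  calc _ = qBinomialTerm q (c / b) z k * (qPoch q (a * q * q ^ m) k / qPoch q (a * q) k) *
        (qPoch q (c * q * q ^ n) k / qPoch q (c * q) k) := by
        rw [pow_add, pow_add, pow_one, ← mul_assoc, ← mul_assoc, qBinomialTerm]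
        ring
    _ = _ := by
        rw [qPoch_shift_div_eq ha_k (hden m).2.1, qPoch_shift_div_eq hc_k (hden n).2.2, eval_mul,
          eval_qPochPoly, eval_qPochPoly]
        ring

/-- The vanishing ₃φ₂ sum: the special case `(y, z) = (a q^{1+m}, c q^{1+n})` of the dual
form of the big q-Jacobi orthogonality. -/
theorem vanishing_3phi2 (q a b c : ℂ) (m n : ℕ)
    (hq0 : 0 < ‖q‖) (hq1 : ‖q‖ < 1)
    (ha : a ≠ 0) (hb : b ≠ 0) (hc : c ≠ 0)
    (harg : ‖b * q ^ (-(m : ℤ) - n) / c‖ < 1)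
    (hden : ∀ k : ℕ, qPoch q q k ≠ 0 ∧ qPoch q (a * q) k ≠ 0 ∧ qPoch q (c * q) k ≠ 0)
    (haq : ∀ k : ℕ, 1 ≤ k → a ≠ q ^ (-(k : ℤ)))
    (hcq : ∀ k : ℕ, 1 ≤ k → c ≠ q ^ (-(k : ℤ))) :
    HasSum (fun k : ℕ =>
      qPoch q (c / b) k * qPoch q (a * q ^ (1 + m)) k * qPoch q (c * q ^ (1 + n)) k /
        (qPoch q q k * qPoch q (a * q) k * qPoch q (c * q) k) *
        (b * q ^ (-(m : ℤ) - n) / c) ^ k) 0 :=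
  vanishing_3phi2_general q a b c m n hq0 hq1 hb hc harg hden
end
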